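/- arXiv:2301.13347 — 8 statements merged into one kernel-verified Lean document; each statement's English description precedes it below -/
import Mathlib

section
/- Let m, k, r be positive integers with r ≤ m and r² ≥ m·k. Let S be a fixed subset of {1,…,m} with |S| = r, and let T be a uniformly random subset of {1,…,m} of cardinality r. Then P[ |S ∩ T| ≤ k ] ≤ (e^k / k^k) · (r²/m)^k · e^{−r²/m}. -/
/-!
For `0 < θ ≤ 1`, exponential Markov gives `#{T : |S ∩ T| ≤ k} · θ^k ≤ ∑_T θ^|S ∩ T|`. Counting `T`
by `(|S ∩ T|, |T \ S|)` turns the right side into the hypergeometric sum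
`∑_{i+j=r} C(r,i) C(m-r,j) θ^i`, which, as for a binomial variable, is at most
`C(m,r) · exp(-r²(1-θ)/m)`; this follows by induction on `|S|` along Pascal's rule. The choice
`θ = km/r²` turns `exp(-r²(1-θ)/m) / θ^k` into the stated bound.
-/

open Real Finset

lemma mul_exp_le_add {θ v : ℝ} (hv : 0 ≤ v) (hθv : θ + v ≤ 1) : θ * exp v ≤ θ + v := by
  have h := add_one_le_exp (-v)
  have hinv : exp (-v) * exp v = 1 := by rw [← exp_add]; simp
  nlinarith [add_one_le_exp v, exp_pos v, mul_le_mul_of_nonneg_right h (exp_pos v).le]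

/-- The weights are the Pascal ratios `C(n,b) / C(n+1,b+1)` and `C(n,b+1) / C(n+1,b+1)`. -/
lemma hypergeom_exp_step {a b n θ : ℝ} (ha : 0 ≤ a) (han : a ≤ n) (hb : 0 ≤ b) (hbn : b ≤ n)
    (hθ : θ ≤ 1) :
    (b + 1) / (n + 1) * θ * exp (-(a * b * (1 - θ)) / n)
        + (n - b) / (n + 1) * exp (-(a * (b + 1) * (1 - θ)) / n)
      ≤ exp (-((a + 1) * (b + 1) * (1 - θ)) / (n + 1)) := by
  rcases (ha.trans han).eq_or_lt with rfl | hn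
  · obtain rfl : a = 0 := by linarith
    obtain rfl : b = 0 := by linarith
    simpa [sub_eq_add_neg, add_comm] using add_one_le_exp (θ - 1)
  set p := (b + 1) / (n + 1)
  set v := a * (1 - θ) / n
  set E := exp (-(a * (b + 1) * (1 - θ)) / n)
  have hp : 0 ≤ p := by positivity
  have hv : 0 ≤ v := div_nonneg (mul_nonneg ha (by linarith)) hn.le
  have hθv : θ + v ≤ 1 := by
    have : v ≤ 1 - θ := by
      rw [div_le_iff₀ hn]
      nlinarith
    linarith
  calc p * θ * exp (-(a * b * (1 - θ)) / n) + (n - b) / (n + 1) * E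
      = E * (p * (θ * exp v) + (1 - p)) := by
        rw [show -(a * b * (1 - θ)) / n = -(a * (b + 1) * (1 - θ)) / n + v by ring, exp_add]
        simp only [p, E]
        field_simp
        ring
    _ ≤ E * exp (-(p * (1 - θ - v))) := by
        gcongr
        nlinarith [mul_exp_le_add hv hθv, add_one_le_exp (-(p * (1 - θ - v)))]
    _ = exp (-((a + 1) * (b + 1) * (1 - θ)) / (n + 1)) := by
        rw [← exp_add]
        congr 1
        simp only [p, v]
        field_simp
        ring

/-- `∑_T θ^|A ∩ T|` over the `b`-subsets `T` of `A ⊔ C`, where `#A = a` and `#C = c`. -/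
noncomputable def hypergeomSum (a c b : ℕ) (θ : ℝ) : ℝ :=
  ∑ p ∈ antidiagonal b, (a.choose p.1 * c.choose p.2 : ℝ) * θ ^ p.1

lemma hypergeomSum_zero_left (c b : ℕ) (θ : ℝ) : hypergeomSum 0 c b θ = c.choose b := by
  cases b <;> simp [hypergeomSum, Nat.sum_antidiagonal_succ]

lemma hypergeomSum_zero (a c : ℕ) (θ : ℝ) : hypergeomSum a c 0 θ = 1 := by
  simp [hypergeomSum]

lemma hypergeomSum_succ_succ (a c b : ℕ) (θ : ℝ) :
    hypergeomSum (a + 1) c (b + 1) θ = hypergeomSum a c (b + 1) θ + θ * hypergeomSum a c b θ := by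
  simp only [hypergeomSum, Nat.sum_antidiagonal_succ, Nat.choose_succ_succ, Nat.choose_zero_right,
    Nat.cast_add, mul_sum]
  rw [add_assoc, ← sum_add_distrib]
  congr 1
  refine sum_congr rfl fun p _ => ?_
  ring

lemma cast_choose_eq_mul_div (n b : ℕ) :
    (n.choose b : ℝ) = (n + 1).choose (b + 1) * (b + 1) / (n + 1) := by
  rw [eq_div_iff (by positivity)]
  exact_mod_cast ((Nat.add_one_mul_choose_eq n b).symm.trans (mul_comm _ _)).symm

lemma cast_choose_succ_eq_mul_div {n b : ℕ} (hbn : b ≤ n) :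
    (n.choose (b + 1) : ℝ) = (n + 1).choose (b + 1) * (n - b) / (n + 1) := by
  rw [eq_div_iff (by positivity), ← Nat.cast_sub hbn]
  exact_mod_cast (Nat.choose_mul_succ_eq n (b + 1)).trans (by rw [Nat.add_sub_add_right])

lemma hypergeomSum_le {θ : ℝ} (hθ0 : 0 ≤ θ) (hθ1 : θ ≤ 1) (a c b : ℕ) :
    hypergeomSum a c b θ ≤ (a + c).choose b * exp (-(a * b * (1 - θ)) / ↑(a + c)) := by
  induction a generalizing b with
  | zero => simp [hypergeomSum_zero_left]
  | succ a ih =>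
    cases b with
    | zero => simp [hypergeomSum_zero]
    | succ b =>
      set n := a + c
      rcases le_or_gt b n with hbn | hnb
      · calc hypergeomSum (a + 1) c (b + 1) θ
            = hypergeomSum a c (b + 1) θ + θ * hypergeomSum a c b θ := hypergeomSum_succ_succ ..
          _ ≤ n.choose (b + 1) * exp (-(a * (b + 1 : ℕ) * (1 - θ)) / n)
              + θ * (n.choose b * exp (-(a * b * (1 - θ)) / n)) :=
            add_le_add (ih _) (mul_le_mul_of_nonneg_left (ih b) hθ0)
          _ = (n + 1).choose (b + 1) * ((b + 1) / (n + 1) * θ * exp (-(a * b * (1 - θ)) / n)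
                + (n - b) / (n + 1) * exp (-(a * (b + 1) * (1 - θ)) / n)) := by
            rw [cast_choose_succ_eq_mul_div hbn, cast_choose_eq_mul_div n b]
            push_cast
            ring
          _ ≤ (n + 1).choose (b + 1) * exp (-((a + 1) * (b + 1) * (1 - θ)) / (n + 1)) := by
            gcongr
            exact hypergeom_exp_step (by positivity) (by simp [n]) (by positivity)
              (by exact_mod_cast hbn) hθ1
          _ = _ := by
            rw [Nat.add_right_comm]
            simp only [n]
            push_cast
            ring_nf
      · have ih₁ := ih (b + 1)
        have ih₀ := ih b
        rw [Nat.choose_eq_zero_of_lt (by omega), Nat.cast_zero, zero_mul] at ih₁ ih₀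
        rw [hypergeomSum_succ_succ, Nat.choose_eq_zero_of_lt (by omega), Nat.cast_zero, zero_mul]
        nlinarith

section Subsets

variable {α : Type*} [Fintype α] [DecidableEq α]

lemma inter_union_of_subset_compl {S A B : Finset α} (hA : A ⊆ S) (hB : B ⊆ Sᶜ) :
    S ∩ (A ∪ B) = A ∧ (A ∪ B) \ S = B := by
  constructor <;> ext x <;> have := @hA x <;> have := @hB x <;> simp at * <;> tauto

lemma card_filter_card_inter_card_sdiff_eq (S : Finset α) (i j : ℕ) :
    #{T ∈ powersetCard (i + j) univ | (#(S ∩ T), #(T \ S)) = (i, j)}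
      = (#S).choose i * (#Sᶜ).choose j := by
  rw [← card_powersetCard i S, ← card_powersetCard j Sᶜ, ← card_product]
  refine card_nbij' (fun T => (S ∩ T, T \ S)) (fun p => p.1 ∪ p.2) ?_ ?_ ?_ ?_
  · intro T hT
    simp only [coe_filter, mem_powersetCard, Set.mem_ofPred_eq, Prod.mk.injEq] at hT
    simpa [hT.2, subset_iff] using fun _ hx _ => hx
  · rintro ⟨A, B⟩ hAB
    simp only [coe_product, Set.mem_prod, mem_coe, mem_powersetCard] at hAB
    obtain ⟨⟨hA, rfl⟩, hB, rfl⟩ := hAB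
    obtain ⟨hSA, hSB⟩ := inter_union_of_subset_compl hA hB
    have hdisj : Disjoint A B := disjoint_of_subset_right hB disjoint_compl_right |>.mono_left hA
    simp [hSA, hSB, card_union_of_disjoint hdisj]
  · intro T _
    dsimp only
    rw [union_comm, inter_comm]
    exact sdiff_union_inter T S
  · rintro ⟨A, B⟩ hAB
    simp only [coe_product, Set.mem_prod, mem_coe, mem_powersetCard] at hAB
    obtain ⟨hSA, hSB⟩ := inter_union_of_subset_compl hAB.1.1 hAB.2.1
    simp [hSA, hSB]

lemma sum_powersetCard_pow_card_inter (S : Finset α) (b : ℕ) (θ : ℝ) :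
    ∑ T ∈ powersetCard b univ, θ ^ #(S ∩ T) = hypergeomSum #S #Sᶜ b θ := by
  have hmaps : ∀ T ∈ powersetCard b univ, (#(S ∩ T), #(T \ S)) ∈ antidiagonal b := by
    intro T hT
    rw [HasAntidiagonal.mem_antidiagonal, inter_comm, card_inter_add_card_sdiff,
      (mem_powersetCard.1 hT).2]
  rw [← sum_fiberwise_of_maps_to hmaps, hypergeomSum]
  refine sum_congr rfl fun ⟨i, j⟩ hij => ?_
  obtain rfl : i + j = b := HasAntidiagonal.mem_antidiagonal.1 hij
  have hfiber : ∀ T ∈ {T ∈ powersetCard (i + j) (univ : Finset α) | (#(S ∩ T), #(T \ S)) = (i, j)},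
      θ ^ #(S ∩ T) = θ ^ i := fun T hT => by rw [(Prod.mk.inj (mem_filter.1 hT).2).1]
  rw [sum_congr rfl hfiber, sum_const, card_filter_card_inter_card_sdiff_eq, nsmul_eq_mul]
  push_cast
  ring

lemma sum_powersetCard_pow_card_inter_le (S : Finset α) (b : ℕ) {θ : ℝ} (hθ0 : 0 ≤ θ)
    (hθ1 : θ ≤ 1) :
    ∑ T ∈ powersetCard b univ, θ ^ #(S ∩ T)
      ≤ (Fintype.card α).choose b * exp (-(#S * b * (1 - θ)) / Fintype.card α) := by
  rw [sum_powersetCard_pow_card_inter, ← card_add_card_compl S]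
  exact hypergeomSum_le hθ0 hθ1 _ _ _

end Subsets

lemma card_filter_le_mul_pow_le_sum_pow {ι : Type*} (s : Finset ι) (f : ι → ℕ) (k : ℕ) {θ : ℝ}
    (hθ0 : 0 ≤ θ) (hθ1 : θ ≤ 1) :
    #{x ∈ s | f x ≤ k} * θ ^ k ≤ ∑ x ∈ s, θ ^ f x :=
  calc #{x ∈ s | f x ≤ k} * θ ^ k ≤ ∑ x ∈ s with f x ≤ k, θ ^ f x := by
        rw [← nsmul_eq_mul]
        exact card_nsmul_le_sum _ _ _ fun x hx => pow_le_pow_of_le_one hθ0 hθ1 (mem_filter.1 hx).2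
    _ ≤ ∑ x ∈ s, θ ^ f x :=
        sum_le_sum_of_subset_of_nonneg (filter_subset _ _) fun _ _ _ => by positivity

theorem stmt_1_general (m k r : ℕ) (hk : 0 < k) (hr : 0 < r)
    (hrm : r ≤ m) (hrk : m * k ≤ r ^ 2)
    (S : Finset (Fin m)) (hS : S.card = r) :
    ((((Finset.univ : Finset (Fin m)).powersetCard r).filter
          (fun T : Finset (Fin m) => (S ∩ T).card ≤ k)).card : ℝ) /
        (((Finset.univ : Finset (Fin m)).powersetCard r).card : ℝ) ≤
      Real.exp 1 ^ k / (k : ℝ) ^ k * ((r : ℝ) ^ 2 / (m : ℝ)) ^ k *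
        Real.exp (-((r : ℝ) ^ 2 / (m : ℝ))) := by
  have hm : (0 : ℝ) < m := by exact_mod_cast hr.trans_le hrm
  set θ : ℝ := k * m / r ^ 2 with hθ
  have hθ0 : 0 < θ := by positivity
  have hθ1 : θ ≤ 1 := by
    rw [div_le_one (by positivity)]
    exact_mod_cast (mul_comm k m).trans_le hrk
  have hchernoff := (card_filter_le_mul_pow_le_sum_pow _ (fun T => #(S ∩ T)) k hθ0.le hθ1).trans
    (sum_powersetCard_pow_card_inter_le S r hθ0.le hθ1)
  have hexponent : -(#S * r * (1 - θ)) / Fintype.card (Fin m) = k + -(r ^ 2 / m : ℝ) := by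
    rw [hS, Fintype.card_fin, hθ]
    field_simp
    ring
  rw [hexponent, Fintype.card_fin, exp_add, ← exp_one_pow] at hchernoff
  have hcoeff : exp 1 ^ k / k ^ k * ((r : ℝ) ^ 2 / m) ^ k = exp 1 ^ k / θ ^ k := by
    rw [hθ]
    field_simp
    rw [← mul_pow]
    field_simp
  rw [hcoeff, card_powersetCard, card_univ, Fintype.card_fin,
    div_le_iff₀ (by exact_mod_cast Nat.choose_pos hrm), div_mul_eq_mul_div, div_mul_eq_mul_div,
    le_div_iff₀ (by positivity)]
  linarith

/-- Let `m, k, r` be positive integers with `r ≤ m` and `r² ≥ mk`,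
let `S ⊆ {1,…,m}` have cardinality `r`, and let `T` be a uniformly random subset
of `{1,…,m}` of cardinality `r` (so probabilities are ratios of counts of size-`r`
subsets).  Then `P[|S ∩ T| ≤ k] ≤ (e^k/k^k)·(r²/m)^k·e^{−r²/m}`. -/
theorem stmt_1 (m k r : ℕ) (hm : 0 < m) (hk : 0 < k) (hr : 0 < r)
    (hrm : r ≤ m) (hrk : m * k ≤ r ^ 2)
    (S : Finset (Fin m)) (hS : S.card = r) :
    ((((Finset.univ : Finset (Fin m)).powersetCard r).filter
          (fun T : Finset (Fin m) => (S ∩ T).card ≤ k)).card : ℝ) /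
        (((Finset.univ : Finset (Fin m)).powersetCard r).card : ℝ) ≤
      Real.exp 1 ^ k / (k : ℝ) ^ k * ((r : ℝ) ^ 2 / (m : ℝ)) ^ k *
        Real.exp (-((r : ℝ) ^ 2 / (m : ℝ))) :=
  stmt_1_general m k r hk hr hrm hrk S hS
end

section
/- Let m, k be positive integers and let X be a nonnegative real-valued random variable such that for every real number r ≥ √(m·k), P[X ≥ 2r] ≤ (e^k / k^k) · (r²/m)^k · e^{−r²/m}. Then E[X] ≤ 2·√(m·k) + √(2π·m). -/
open MeasureTheory ProbabilityTheory
open scoped ENNReal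

/-- Layercake upper bound, valid without measurability of `X`. -/
lemma aux_layercake {Ω : Type*} [MeasureSpace Ω] (X : Ω → ℝ) (hX : ∀ ω, 0 ≤ X ω) :
    ∫⁻ ω, ENNReal.ofReal (X ω) ∂ℙ ≤ ∫⁻ t in Set.Ioi (0:ℝ), ℙ {ω | t ≤ X ω} := by
  rw [← iSup_lintegral_measurable_le_eq_lintegral]
  refine iSup_le fun g => iSup_le fun hg => iSup_le fun hgle => ?_
  have hfin : ∀ ω, g ω ≠ ∞ := fun ω => (lt_of_le_of_lt (hgle ω) ENNReal.ofReal_lt_top).ne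
  have hψX : ∀ ω, (g ω).toReal ≤ X ω := by
    intro ω
    have := ENNReal.toReal_mono ENNReal.ofReal_ne_top (hgle ω)
    rwa [ENNReal.toReal_ofReal (hX ω)] at this
  calc ∫⁻ ω, g ω ∂ℙ = ∫⁻ ω, ENNReal.ofReal ((g ω).toReal) ∂ℙ := by
        simp_rw [fun ω => ENNReal.ofReal_toReal (hfin ω)]
    _ = ∫⁻ t in Set.Ioi (0:ℝ), ℙ {ω | t ≤ (g ω).toReal} :=
        lintegral_eq_lintegral_meas_le ℙ
          (Filter.Eventually.of_forall fun ω => ENNReal.toReal_nonneg)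
          (hg.ennreal_toReal.aemeasurable)
    _ ≤ _ := lintegral_mono fun t =>
        measure_mono fun ω hω => le_trans hω (hψX ω)

/-- The pointwise bound `(e/k)^k x^k e^{-x} ≤ e^{-(x-k)²/(2x)}` for `x ≥ k ≥ 1`. -/
lemma aux_key (k : ℕ) (hk : 0 < k) {x : ℝ} (hx : (k:ℝ) ≤ x) :
    Real.exp 1 ^ k / (k : ℝ) ^ k * x ^ k * Real.exp (-x) ≤
      Real.exp (-((x - k) ^ 2 / (2 * x))) := by
  have hk0 : (0:ℝ) < k := by exact_mod_cast hk
  have hx0 : (0:ℝ) < x := lt_of_lt_of_le hk0 hx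
  have hek : Real.exp 1 ^ k = Real.exp k := by
    rw [← Real.exp_nat_mul]; norm_num
  have hkk : (k:ℝ) ^ k = Real.exp (k * Real.log k) := by
    rw [Real.exp_nat_mul, Real.exp_log hk0]
  have hxk : x ^ k = Real.exp (k * Real.log x) := by
    rw [Real.exp_nat_mul, Real.exp_log hx0]
  rw [hek, hkk, hxk, ← Real.exp_sub, ← Real.exp_add, ← Real.exp_add, Real.exp_le_exp]
  set t : ℝ := Real.log x - Real.log k with ht_def
  have ht : 0 ≤ t := sub_nonneg.mpr (Real.log_le_log hk0 hx)
  have hsinh : t ≤ Real.sinh t := Real.self_le_sinh_iff.mpr ht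
  have hsinh_eq : Real.sinh t = (x / k - k / x) / 2 := by
    rw [Real.sinh_eq, ht_def, ← Real.log_div hx0.ne' hk0.ne', Real.exp_log (by positivity),
      ← Real.log_inv, Real.exp_log (by positivity), inv_div]
  have h1 : (k:ℝ) * t ≤ (k:ℝ) * Real.sinh t :=
    mul_le_mul_of_nonneg_left hsinh hk0.le
  have h2 : (k:ℝ) * Real.sinh t = (x^2 - k^2) / (2*x) := by
    rw [hsinh_eq]; field_simp
  have h3 : ((x - k)^2) / (2*x) = x - k - (x^2 - k^2)/(2*x) := by
    field_simp; ring
  have ht' : (k:ℝ) * t = (k:ℝ) * Real.log x - (k:ℝ) * Real.log k := by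
    rw [ht_def]; ring
  linarith [h1, h2, h3, ht']

/-- Comparison of the exponent with a Gaussian exponent. -/
lemma aux_cmp (m k : ℕ) (hm : 0 < m) (hk : 0 < k) {r : ℝ}
    (hr : Real.sqrt ((m:ℝ) * k) ≤ r) :
    (r - Real.sqrt ((m:ℝ) * k)) ^ 2 / (2 * m) ≤ (r ^ 2 / m - k) ^ 2 / (2 * (r ^ 2 / m)) := by
  have hm0 : (0:ℝ) < m := by exact_mod_cast hm
  have hk0 : (0:ℝ) < k := by exact_mod_cast hk
  set c : ℝ := Real.sqrt ((m:ℝ) * k) with hc_def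
  have hc2 : c ^ 2 = (m:ℝ) * k := Real.sq_sqrt (by positivity)
  have hc0 : 0 < c := Real.sqrt_pos.mpr (by positivity)
  have hr0 : 0 < r := lt_of_lt_of_le hc0 hr
  rw [div_le_div_iff₀ (by positivity) (by positivity)]
  have key : (r - c) ^ 2 * r ^ 2 ≤ (r ^ 2 - c ^ 2) ^ 2 := by
    nlinarith [sq_nonneg (r - c), mul_pos hr0 hc0, sq_nonneg (r + c),
      mul_nonneg (sq_nonneg (r-c)) (mul_pos hr0 hc0).le]
  have hsub : r ^ 2 / m - k = (r ^ 2 - c ^ 2) / m := by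
    rw [hc2]; field_simp
  rw [hsub, div_pow]
  have e1 : (r ^ 2 - c ^ 2) ^ 2 / (↑m:ℝ) ^ 2 * (2 * ↑m) = (r ^ 2 - c ^ 2) ^ 2 * (2 / ↑m) := by
    field_simp
  have e2 : (r - c) ^ 2 * (2 * (r ^ 2 / (↑m:ℝ))) = ((r - c) ^ 2 * r ^ 2) * (2 / ↑m) := by
    field_simp
  rw [e1, e2]
  exact mul_le_mul_of_nonneg_right key (by positivity)

/-- Translation invariance for set integrals over half-lines. -/
lemma aux_shift (f : ℝ → ℝ) (a : ℝ) :
    ∫ t in Set.Ioi a, f (t - a) = ∫ s in Set.Ioi (0:ℝ), f s := by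
  rw [← integral_indicator measurableSet_Ioi, ← integral_indicator measurableSet_Ioi]
  have : (Set.Ioi a).indicator (fun t => f (t - a))
      = fun t => (Set.Ioi (0:ℝ)).indicator f (t - a) := by
    funext t
    by_cases h : a < t
    · rw [Set.indicator_of_mem (Set.mem_Ioi.mpr h),
        Set.indicator_of_mem (Set.mem_Ioi.mpr (by linarith))]
    · rw [Set.indicator_of_notMem (by simpa using h),
        Set.indicator_of_notMem (by simp [Set.mem_Ioi]; linarith [le_of_not_gt h])]
  rw [this, integral_sub_right_eq_self (fun s => (Set.Ioi (0:ℝ)).indicator f s) a]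

/-- The Gaussian tail integral. -/
lemma aux_gauss (m : ℕ) (hm : 0 < m) (a : ℝ) :
    ∫ t in Set.Ioi a, Real.exp (-((t - a) ^ 2 / (8 * m))) = Real.sqrt (2 * Real.pi * m) := by
  have hm0 : (0:ℝ) < m := by exact_mod_cast hm
  have hb : (0:ℝ) < 1 / (8 * m) := by positivity
  have hfun : ∀ s : ℝ, Real.exp (-(s ^ 2 / (8 * m))) = Real.exp (-(1/(8*m)) * s ^ 2) := by
    intro s; congr 1; field_simp
  calc ∫ t in Set.Ioi a, Real.exp (-((t - a) ^ 2 / (8 * m)))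
      = ∫ s in Set.Ioi (0:ℝ), Real.exp (-(s ^ 2 / (8 * m))) :=
        aux_shift (fun s => Real.exp (-(s ^ 2 / (8 * m)))) a
    _ = ∫ s in Set.Ioi (0:ℝ), Real.exp (-(1/(8*m)) * s ^ 2) := by simp_rw [hfun]
    _ = Real.sqrt (Real.pi / (1/(8*m))) / 2 := integral_gaussian_Ioi _
    _ = Real.sqrt (2 * Real.pi * m) := by
        rw [show Real.pi / (1/(8*m)) = 4 * (2 * Real.pi * m) by field_simp; ring,
          Real.sqrt_mul (by norm_num), show (4:ℝ) = 2^2 by norm_num,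
          Real.sqrt_sq (by norm_num)]
        ring

/-- If `X ≥ 0` satisfies the tail bound
`P[X ≥ 2r] ≤ (e^k/k^k)·(r²/m)^k·e^{−r²/m}` for every real `r ≥ √(mk)`,
then `E[X] ≤ 2√(mk) + √(2πm)`. -/
theorem stmt_2 {Ω : Type*} [MeasureSpace Ω] [IsProbabilityMeasure (ℙ : Measure Ω)]
    (m k : ℕ) (hm : 0 < m) (hk : 0 < k) (X : Ω → ℝ) (hX : ∀ ω, 0 ≤ X ω)
    (htail : ∀ r : ℝ, Real.sqrt (m * k) ≤ r →
      ℙ {ω : Ω | 2 * r ≤ X ω} ≤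
        ENNReal.ofReal
          (Real.exp 1 ^ k / (k : ℝ) ^ k * (r ^ 2 / (m : ℝ)) ^ k *
            Real.exp (-(r ^ 2 / (m : ℝ))))) :
    ∫⁻ ω, ENNReal.ofReal (X ω) ∂ℙ ≤
      ENNReal.ofReal (2 * Real.sqrt (m * k) + Real.sqrt (2 * Real.pi * m)) := by
  have hm0 : (0:ℝ) < m := by exact_mod_cast hm
  have hk0 : (0:ℝ) < k := by exact_mod_cast hk
  set c : ℝ := Real.sqrt ((m:ℝ) * k) with hc_def
  have hc0 : 0 < c := Real.sqrt_pos.mpr (by positivity)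
  have hc2 : c ^ 2 = (m:ℝ) * k := Real.sq_sqrt (by positivity)
  refine le_trans (aux_layercake X hX) ?_
  rw [← Set.Ioc_union_Ioi_eq_Ioi (show (0:ℝ) ≤ 2*c by positivity)]
  refine le_trans (lintegral_union_le _ _ _) ?_
  have part1 : ∫⁻ t in Set.Ioc 0 (2*c), ℙ {ω | t ≤ X ω} ≤ ENNReal.ofReal (2*c) := by
    calc ∫⁻ t in Set.Ioc 0 (2*c), ℙ {ω | t ≤ X ω}
        ≤ ∫⁻ _ in Set.Ioc 0 (2*c), 1 := lintegral_mono fun t => prob_le_one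
      _ = volume (Set.Ioc (0:ℝ) (2*c)) := setLIntegral_one _
      _ = ENNReal.ofReal (2*c) := by rw [Real.volume_Ioc, sub_zero]
  have part2 : ∫⁻ t in Set.Ioi (2*c), ℙ {ω | t ≤ X ω}
      ≤ ENNReal.ofReal (Real.sqrt (2 * Real.pi * m)) := by
    have hbound : ∀ t ∈ Set.Ioi (2*c),
        ℙ {ω | t ≤ X ω} ≤ ENNReal.ofReal (Real.exp (-((t - 2*c)^2/(8*m)))) := by
      intro t ht
      rw [Set.mem_Ioi] at ht
      have htc : c ≤ t/2 := by linarith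
      have hset : {ω | t ≤ X ω} = {ω | 2*(t/2) ≤ X ω} := by rw [show (2:ℝ)*(t/2) = t from by ring]
      refine le_trans (hset ▸ htail (t/2) htc) (ENNReal.ofReal_le_ofReal ?_)
      have hxk : (k:ℝ) ≤ (t/2)^2/m := by
        rw [le_div_iff₀ hm0]
        nlinarith [hc2, mul_le_mul htc htc hc0.le (le_trans hc0.le htc)]
      refine le_trans (aux_key k hk hxk) ?_
      rw [Real.exp_le_exp]
      have hcmp := aux_cmp m k hm hk htc
      have heq : (t - 2*c)^2/(8*(m:ℝ)) = (t/2 - c)^2/(2*m) := by ring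
      rw [neg_le_neg_iff, heq]
      exact hcmp
    have hintble : IntegrableOn (fun t => Real.exp (-((t - 2*c)^2/(8*(m:ℝ))))) (Set.Ioi (2*c)) := by
      have hb : (0:ℝ) < 1/(8*m) := by positivity
      have h1 : Integrable (fun s : ℝ => Real.exp (-(1/(8*(m:ℝ))) * s^2)) :=
        integrable_exp_neg_mul_sq hb
      have h2 := h1.comp_sub_right (2*c)
      have : (fun t : ℝ => Real.exp (-((t - 2*c)^2/(8*(m:ℝ)))))
          = fun t : ℝ => Real.exp (-(1/(8*(m:ℝ))) * (t - 2*c)^2) := by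
        funext t; congr 1; field_simp
      rw [this]
      exact h2.integrableOn
    calc ∫⁻ t in Set.Ioi (2*c), ℙ {ω | t ≤ X ω}
        ≤ ∫⁻ t in Set.Ioi (2*c), ENNReal.ofReal (Real.exp (-((t - 2*c)^2/(8*m)))) := by
          refine setLIntegral_mono ?_ hbound
          exact ENNReal.measurable_ofReal.comp
            (Real.continuous_exp.comp (by continuity)).measurable
      _ = ENNReal.ofReal (∫ t in Set.Ioi (2*c), Real.exp (-((t - 2*c)^2/(8*(m:ℝ))))) :=
          (ofReal_integral_eq_lintegral_ofReal hintble
            (Filter.Eventually.of_forall fun t => (Real.exp_pos _).le)).symm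
      _ = ENNReal.ofReal (Real.sqrt (2 * Real.pi * m)) := by rw [aux_gauss m hm (2*c)]
  refine le_trans (add_le_add part1 part2) ?_
  rw [← ENNReal.ofReal_add (by positivity) (Real.sqrt_nonneg _)]
end

section
/- For every positive integer k, e^k · (2k)! / (k^k · 4^k · k!) ≤ √2. -/
/-!
With the Stirling sequence `s n = n! / (√(2n) (n/e)^n)`, the left-hand side equals
`√2 · s (2k) / s k`, and `s` is antitone on the positive integers, so the ratio is at most `1`.
-/

open Real Nat

namespace Stirling

theorem stirlingSeq_le_of_le {m n : ℕ} (hm : m ≠ 0) (h : m ≤ n) :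
    stirlingSeq n ≤ stirlingSeq m := by
  obtain ⟨m, rfl⟩ := exists_eq_succ_of_ne_zero hm
  obtain ⟨n, rfl⟩ := exists_eq_succ_of_ne_zero (by omega : n ≠ 0)
  exact stirlingSeq'_antitone (succ_le_succ_iff.mp h)

theorem sqrt_two_mul_stirlingSeq_two_mul_div {k : ℕ} (hk : k ≠ 0) :
    √2 * (stirlingSeq (2 * k) / stirlingSeq k) =
      exp 1 ^ k * (2 * k)! / ((k : ℝ) ^ k * 4 ^ k * k !) := by
  have hsqrt : √(2 * ((2 * k : ℕ) : ℝ)) = √2 * √(2 * k) := by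
    push_cast
    rw [← sqrt_mul zero_le_two]
  have hpow : (((2 * k : ℕ) : ℝ) / exp 1) ^ (2 * k) =
      4 ^ k * ((k : ℝ) ^ k) ^ 2 / (exp 1 ^ k) ^ 2 := by
    push_cast
    rw [show (4 : ℝ) ^ k = 2 ^ (2 * k) by rw [pow_mul]; norm_num]
    ring
  have : 0 < √(2 * (k : ℝ)) := by positivity
  simp only [stirlingSeq, hsqrt, hpow, div_pow]
  field_simp

end Stirling

open Stirling in
/-- For all positive integers `k`,
`e^k · (2k)! / (k^k · 4^k · k!) ≤ √2`. -/
theorem stmt_3 (k : ℕ) (hk : 0 < k) :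
    Real.exp 1 ^ k * (Nat.factorial (2 * k) : ℝ) /
      ((k : ℝ) ^ k * 4 ^ k * (Nat.factorial k : ℝ)) ≤ Real.sqrt 2 := by
  rw [← sqrt_two_mul_stirlingSeq_two_mul_div hk.ne']
  have hpos : 0 < stirlingSeq k :=
    (sqrt_pos.mpr pi_pos).trans_le (sqrt_pi_le_stirlingSeq hk.ne')
  have hratio : stirlingSeq (2 * k) / stirlingSeq k ≤ 1 :=
    (div_le_one hpos).mpr (stirlingSeq_le_of_le hk.ne' (by omega))
  simpa using mul_le_mul_of_nonneg_left hratio (sqrt_nonneg 2)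
end

section
/- Let N, n be positive integers with n ≤ N, let x_1, …, x_N ∈ {0,1}, let p = (1/N)·∑_{i=1}^N x_i and μ = n·p. Let T be a uniformly random subset of {1,…,N} of cardinality n and let Y = ∑_{i∈T} x_i. Then for every λ ∈ [0,1), P[Y ≤ (1−λ)·μ] ≤ ( e^{−λ} / (1−λ)^{1−λ} )^{μ} ≤ e^{−λ²·μ/2} (where (1−λ)^{1−λ} is interpreted via the real power function, equal to 1 when λ = 0). -/
open Finset

private lemma amgm_pow (k : ℕ) {x y : ℝ} (hx : 0 ≤ x) (hy : 0 ≤ y) :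
    x ^ k * y ≤ (((k : ℝ) * x + y) / ((k : ℝ) + 1)) ^ (k + 1) := by
  have hk1 : (0:ℝ) < (k:ℝ) + 1 := by positivity
  have hw : (k:ℝ)/((k:ℝ)+1) + 1/((k:ℝ)+1) = 1 := by field_simp
  have h := Real.geom_mean_le_arith_mean2_weighted
    (by positivity : (0:ℝ) ≤ (k:ℝ)/((k:ℝ)+1)) (by positivity : (0:ℝ) ≤ 1/((k:ℝ)+1)) hx hy hw
  have h2 := pow_le_pow_left₀ (by positivity) h (k+1)
  have hl : (x ^ ((k:ℝ)/((k:ℝ)+1)) * y ^ (1/((k:ℝ)+1))) ^ (k+1) = x ^ k * y := by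
    rw [mul_pow, ← Real.rpow_natCast (x ^ ((k:ℝ)/((k:ℝ)+1))) (k+1),
      ← Real.rpow_natCast (y ^ (1/((k:ℝ)+1))) (k+1),
      ← Real.rpow_mul hx, ← Real.rpow_mul hy]
    have e1 : (k:ℝ)/((k:ℝ)+1) * ((k+1 : ℕ) : ℝ) = (k:ℝ) := by
      push_cast; field_simp
    have e2 : 1/((k:ℝ)+1) * ((k+1 : ℕ) : ℝ) = 1 := by
      push_cast; field_simp
    rw [e1, e2, Real.rpow_natCast, Real.rpow_one]
  have hm : ((k:ℝ)/((k:ℝ)+1) * x + 1/((k:ℝ)+1) * y) = ((k:ℝ) * x + y) / ((k:ℝ) + 1) := by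
    field_simp
  rw [hl, hm] at h2
  exact h2

private lemma step_ineq (K k : ℕ) {u χ m' : ℝ} (hu0 : 0 ≤ u) (hu1 : u ≤ 1)
    (hχ : χ = 0 ∨ χ = 1) (hm0 : 0 ≤ m') (hmK : m' ≤ (K : ℝ)) :
    (K.choose (k+1) : ℝ) * (1 - u * (m' / K)) ^ (k+1)
      + (1 - u * χ) * ((K.choose k : ℝ) * (1 - u * (m' / K)) ^ k)
    ≤ (((K+1).choose (k+1) : ℝ)) * (1 - u * ((χ + m') / ((K:ℝ)+1))) ^ (k+1) := by
  have hw : 0 ≤ 1 - u * χ := by rcases hχ with h | h <;> rw [h] <;> nlinarith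
  have hχ0 : 0 ≤ χ := by rcases hχ with h | h <;> rw [h] <;> norm_num
  have hχ1 : χ ≤ 1 := by rcases hχ with h | h <;> rw [h] <;> norm_num
  rcases Nat.eq_zero_or_pos K with hK | hK
  · subst hK
    have hm'0 : m' = 0 := le_antisymm (by exact_mod_cast hmK) hm0
    subst hm'0
    match k with
    | 0 => norm_num
    | k+1 =>
      rw [Nat.choose_eq_zero_of_lt (by omega), Nat.choose_eq_zero_of_lt (by omega),
        Nat.choose_eq_zero_of_lt (by omega)]
      norm_num
  · rcases lt_or_ge K k with hKk | hKk
    · rw [Nat.choose_eq_zero_of_lt (by omega), Nat.choose_eq_zero_of_lt (by omega),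
        Nat.choose_eq_zero_of_lt (by omega)]
      norm_num
    · -- main case: 0 < K, k ≤ K
      have hKR : (0:ℝ) < (K:ℝ) := by exact_mod_cast hK
      have hK1 : (0:ℝ) < (K:ℝ) + 1 := by linarith
      set a : ℝ := 1 - u * (m' / K) with ha_def
      have ha : 0 ≤ a := by
        have h1 : u * (m' / K) ≤ 1 := by
          rw [mul_div_assoc', div_le_one hKR]; nlinarith
        rw [ha_def]; linarith
      have hkK : (k:ℝ) ≤ (K:ℝ) := by exact_mod_cast hKk
      set y : ℝ := (((K:ℝ) - k) * a + ((k:ℝ)+1) * (1 - u * χ)) / ((K:ℝ)+1) with hy_def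
      have hy : 0 ≤ y := by
        apply div_nonneg _ (le_of_lt hK1)
        have : 0 ≤ ((K:ℝ) - k) * a := mul_nonneg (by linarith) ha
        nlinarith
      have hAM := amgm_pow k ha hy
      have hmean : ((k:ℝ) * a + y) / ((k:ℝ)+1) = 1 - u * ((χ + m') / ((K:ℝ)+1)) := by
        rw [hy_def, ha_def]
        field_simp
        ring
      -- choose identities
      have hC1 : (K.choose (k+1) : ℝ) = ((K+1).choose (k+1) : ℝ) * ((K:ℝ) - k) / ((K:ℝ)+1) := by
        have h := Nat.choose_mul_succ_eq K (k+1)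
        have h2 : K + 1 - (k + 1) = K - k := by omega
        rw [h2] at h
        have h3 : ((K.choose (k+1) * (K+1) : ℕ) : ℝ) = (((K+1).choose (k+1) * (K - k) : ℕ) : ℝ) :=
          congrArg _ h
        push_cast [Nat.cast_sub hKk] at h3
        field_simp
        linarith
      have hC2 : (K.choose k : ℝ) = ((K+1).choose (k+1) : ℝ) * ((k:ℝ)+1) / ((K:ℝ)+1) := by
        have h := Nat.add_one_mul_choose_eq K k
        have h3 : (((K+1) * K.choose k : ℕ) : ℝ) = (((K+1).choose (k+1) * (k+1) : ℕ) : ℝ) :=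
          congrArg _ h
        push_cast at h3
        field_simp
        linarith
      have hkey : (K.choose (k+1) : ℝ) * a ^ (k+1)
          + (1 - u * χ) * ((K.choose k : ℝ) * a ^ k)
          = ((K+1).choose (k+1) : ℝ) * (a ^ k * y) := by
        rw [hC1, hC2, hy_def]
        field_simp
        ring
      rw [hkey, ← hmean]
      exact mul_le_mul_of_nonneg_left hAM (by positivity)

private lemma count_bound {ι : Type*} [DecidableEq ι] {u : ℝ} (hu0 : 0 ≤ u) (hu1 : u ≤ 1)
    {x : ι → ℝ} (hx : ∀ i, x i = 0 ∨ x i = 1) (s : Finset ι) :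
    ∀ n : ℕ,
      ∑ T ∈ s.powersetCard n, ∏ i ∈ T, (1 - u * x i) ≤
        (s.card.choose n : ℝ) * (1 - u * ((∑ i ∈ s, x i) / s.card)) ^ n := by
  induction s using Finset.cons_induction with
  | empty =>
    intro n
    match n with
    | 0 => simp
    | n+1 =>
      rw [Finset.powersetCard_eq_empty.2 (by simp)]
      simp
  | cons j s' hj IH =>
    intro n
    match n with
    | 0 => simp
    | k+1 =>
      have hwj : 0 ≤ 1 - u * x j := by
        rcases hx j with h | h <;> rw [h] <;> nlinarith
      rw [Finset.cons_eq_insert, Finset.powersetCard_succ_insert hj]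
      have hdisj : Disjoint (Finset.powersetCard (k+1) s')
          ((Finset.powersetCard k s').image (insert j)) := by
        rw [Finset.disjoint_left]
        intro T hT1 hT2
        rw [Finset.mem_powersetCard] at hT1
        obtain ⟨A, hA, rfl⟩ := Finset.mem_image.1 hT2
        exact hj (hT1.1 (Finset.mem_insert_self j A))
      rw [Finset.sum_union hdisj]
      have hinj : Set.InjOn (insert j) (Finset.powersetCard k s' : Set (Finset ι)) := by
        intro A hA B hB hAB
        rw [Finset.mem_coe, Finset.mem_powersetCard] at hA hB
        have hjA : j ∉ A := fun h => hj (hA.1 h)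
        have hjB : j ∉ B := fun h => hj (hB.1 h)
        have := congrArg (Finset.erase · j) hAB
        simpa [Finset.erase_insert hjA, Finset.erase_insert hjB] using this
      rw [Finset.sum_image hinj]
      have hprod : ∀ A ∈ Finset.powersetCard k s',
          ∏ i ∈ insert j A, (1 - u * x i) = (1 - u * x j) * ∏ i ∈ A, (1 - u * x i) := by
        intro A hA
        rw [Finset.mem_powersetCard] at hA
        exact Finset.prod_insert (fun h => hj (hA.1 h))
      rw [Finset.sum_congr rfl hprod, ← Finset.mul_sum]
      have hm0 : 0 ≤ ∑ i ∈ s', x i :=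
        Finset.sum_nonneg fun i _ => by rcases hx i with h | h <;> rw [h] <;> norm_num
      have hmK : (∑ i ∈ s', x i) ≤ (s'.card : ℝ) := by
        calc (∑ i ∈ s', x i) ≤ ∑ _i ∈ s', (1:ℝ) :=
              Finset.sum_le_sum fun i _ => by rcases hx i with h | h <;> rw [h] <;> norm_num
        _ = (s'.card : ℝ) := by simp
      have h1 := IH (k+1)
      have h2 := IH k
      calc (∑ T ∈ Finset.powersetCard (k+1) s', ∏ i ∈ T, (1 - u * x i))
            + (1 - u * x j) * ∑ T ∈ Finset.powersetCard k s', ∏ i ∈ T, (1 - u * x i)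
          ≤ (s'.card.choose (k+1) : ℝ) * (1 - u * ((∑ i ∈ s', x i) / s'.card)) ^ (k+1)
            + (1 - u * x j) *
              ((s'.card.choose k : ℝ) * (1 - u * ((∑ i ∈ s', x i) / s'.card)) ^ k) :=
            add_le_add h1 (mul_le_mul_of_nonneg_left h2 hwj)
        _ ≤ ((s'.card+1).choose (k+1) : ℝ) *
              (1 - u * ((x j + ∑ i ∈ s', x i) / ((s'.card : ℝ)+1))) ^ (k+1) :=
            step_ineq s'.card k hu0 hu1 (hx j) hm0 hmK
        _ = ((insert j s').card.choose (k+1) : ℝ) *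
              (1 - u * ((∑ i ∈ insert j s', x i) / (insert j s').card)) ^ (k+1) := by
            rw [Finset.card_insert_of_notMem hj, Finset.sum_insert hj]
            push_cast
            ring_nf

private lemma base_ineq {lam : ℝ} (h0 : 0 ≤ lam) (h1 : lam < 1) :
    Real.exp (-lam) / (1 - lam) ^ ((1:ℝ) - lam) ≤ Real.exp (-(lam ^ 2 / 2)) := by
  have hz : 0 < 1 - lam := by linarith
  rw [Real.rpow_def_of_pos hz, ← Real.exp_sub, Real.exp_le_exp]
  rcases eq_or_lt_of_le h0 with h | h
  · rw [← h]; norm_num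
  · have hlog : Real.log (1 - lam) < 0 := Real.log_neg hz (by linarith)
    set t : ℝ := -Real.log (1 - lam) with ht_def
    have ht : 0 < t := by rw [ht_def]; linarith
    have hsinh := (Real.self_lt_sinh_iff.2 ht)
    rw [Real.sinh_eq] at hsinh
    have he1 : Real.exp t = (1 - lam)⁻¹ := by
      rw [ht_def, Real.exp_neg, Real.exp_log hz]
    have he2 : Real.exp (-t) = 1 - lam := by
      rw [ht_def, neg_neg, Real.exp_log hz]
    rw [he1, he2] at hsinh
    have hinv : (1 - lam) * (1 - lam)⁻¹ = 1 := mul_inv_cancel₀ (ne_of_gt hz)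
    have key : t * (1 - lam) < lam - lam ^ 2 / 2 := by nlinarith
    have : Real.log (1 - lam) * (1 - lam) = -(t * (1 - lam)) := by rw [ht_def]; ring
    nlinarith


/-- Chernoff bound for sampling without replacement: Let
`x : Fin N → {0,1}`, `p = (∑ x i)/N`, `μ = n·p`, and let `T` be a uniformly
random size-`n` subset of `{1,…,N}` (probabilities are ratios of counts of
size-`n` subsets); let `Y = ∑_{i∈T} x i`.  Then for every `λ ∈ [0,1)`,
`P[Y ≤ (1−λ)μ] ≤ (e^{−λ}/(1−λ)^{1−λ})^μ ≤ e^{−λ²μ/2}`, where real powers are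
used. -/
theorem stmt_4 (N n : ℕ) (hN : 0 < N) (hn : 0 < n) (hnN : n ≤ N)
    (x : Fin N → ℝ) (hx : ∀ i, x i = 0 ∨ x i = 1) (lam : ℝ)
    (hlam0 : 0 ≤ lam) (hlam1 : lam < 1) :
    (((((Finset.univ : Finset (Fin N)).powersetCard n).filter
            (fun T : Finset (Fin N) =>
              ∑ i ∈ T, x i ≤
                (1 - lam) * ((n : ℝ) * ((∑ i, x i) / (N : ℝ))))).card : ℝ) /
          ((((Finset.univ : Finset (Fin N)).powersetCard n)).card : ℝ) ≤
        (Real.exp (-lam) / (1 - lam) ^ (1 - lam)) ^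
          ((n : ℝ) * ((∑ i, x i) / (N : ℝ)))) ∧
      (Real.exp (-lam) / (1 - lam) ^ (1 - lam)) ^
          ((n : ℝ) * ((∑ i, x i) / (N : ℝ))) ≤
        Real.exp (-(lam ^ 2 * ((n : ℝ) * ((∑ i, x i) / (N : ℝ))) / 2)) := by
  have hz : 0 < 1 - lam := by linarith
  have hM0 : 0 ≤ ∑ i, x i :=
    Finset.sum_nonneg fun i _ => by rcases hx i with h | h <;> rw [h] <;> norm_num
  have hMN : (∑ i, x i) ≤ (N : ℝ) := by
    calc (∑ i, x i) ≤ ∑ _i : Fin N, (1:ℝ) :=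
          Finset.sum_le_sum fun i _ => by rcases hx i with h | h <;> rw [h] <;> norm_num
      _ = (N : ℝ) := by simp
  set μ : ℝ := (n : ℝ) * ((∑ i, x i) / (N : ℝ)) with hμ_def
  have hNpos : (0:ℝ) < (N:ℝ) := by exact_mod_cast hN
  have hμ0 : 0 ≤ μ := by
    rw [hμ_def]; positivity
  have hbase0 : 0 ≤ Real.exp (-lam) / (1 - lam) ^ ((1:ℝ) - lam) :=
    div_nonneg (Real.exp_pos _).le (Real.rpow_nonneg hz.le _)
  constructor
  · -- Chernoff part
    have hratio : (1 - lam * ((∑ i, x i) / (N:ℝ))) ^ n ≤ Real.exp (-(lam * μ)) := by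
      have hd1 : (∑ i, x i) / (N:ℝ) ≤ 1 := by rw [div_le_one hNpos]; exact hMN
      have hd0 : 0 ≤ (∑ i, x i) / (N:ℝ) := by positivity
      have h1 : 0 ≤ 1 - lam * ((∑ i, x i) / (N:ℝ)) := by nlinarith
      have h2 : 1 - lam * ((∑ i, x i) / (N:ℝ)) ≤ Real.exp (-(lam * ((∑ i, x i) / (N:ℝ)))) := by
        have := Real.add_one_le_exp (-(lam * ((∑ i, x i) / (N:ℝ)))); linarith
      calc (1 - lam * ((∑ i, x i) / (N:ℝ))) ^ n
          ≤ (Real.exp (-(lam * ((∑ i, x i) / (N:ℝ))))) ^ n := pow_le_pow_left₀ h1 h2 n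
        _ = Real.exp ((n:ℕ) * -(lam * ((∑ i, x i) / (N:ℝ)))) := (Real.exp_nat_mul _ n).symm
        _ = Real.exp (-(lam * μ)) := by rw [hμ_def]; congr 1; push_cast; ring
    have hcount := count_bound hlam0 hlam1.le hx (Finset.univ : Finset (Fin N)) n
    rw [Finset.card_univ, Fintype.card_fin] at hcount
    have hQ : (Real.exp (-lam) / (1 - lam) ^ ((1:ℝ) - lam)) ^ μ
        = Real.exp (-(lam * μ)) / (1 - lam) ^ ((1 - lam) * μ) := by
      rw [Real.div_rpow (Real.exp_pos _).le (Real.rpow_nonneg hz.le _),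
        ← Real.exp_mul, ← Real.rpow_mul hz.le]
      congr 1
      ring
    have hD : (((Finset.univ : Finset (Fin N)).powersetCard n).card : ℝ) = (N.choose n : ℝ) := by
      rw [Finset.card_powersetCard, Finset.card_univ, Fintype.card_fin]
    have hDpos : (0:ℝ) < (N.choose n : ℝ) := by exact_mod_cast Nat.choose_pos hnN
    have hR : (0:ℝ) < (1 - lam) ^ ((1 - lam) * μ) := Real.rpow_pos_of_pos hz _
    rw [hQ, hD, div_le_div_iff₀ hDpos hR]
    have hkey : ∀ T ∈ ((Finset.univ : Finset (Fin N)).powersetCard n).filter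
        (fun T : Finset (Fin N) => ∑ i ∈ T, x i ≤ (1 - lam) * μ),
        (1 - lam) ^ ((1 - lam) * μ) ≤ ∏ i ∈ T, (1 - lam * x i) := by
      intro T hT
      rw [Finset.mem_filter] at hT
      have hprod : ∏ i ∈ T, (1 - lam * x i)
          = Real.exp (∑ i ∈ T, x i * Real.log (1 - lam)) := by
        rw [Real.exp_sum]
        refine Finset.prod_congr rfl fun i _ => ?_
        rcases hx i with h | h <;> rw [h]
        · norm_num
        · rw [one_mul, Real.exp_log hz, mul_one]
      rw [hprod, Real.rpow_def_of_pos hz, Real.exp_le_exp]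
      have hlog : Real.log (1 - lam) ≤ 0 := Real.log_nonpos hz.le (by linarith)
      have := mul_le_mul_of_nonpos_right hT.2 hlog
      rw [← Finset.sum_mul]
      calc Real.log (1 - lam) * ((1 - lam) * μ) = ((1 - lam) * μ) * Real.log (1 - lam) := by ring
        _ ≤ (∑ i ∈ T, x i) * Real.log (1 - lam) := this
    calc ((((Finset.univ : Finset (Fin N)).powersetCard n).filter
            (fun T : Finset (Fin N) => ∑ i ∈ T, x i ≤ (1 - lam) * μ)).card : ℝ)
          * (1 - lam) ^ ((1 - lam) * μ)
        = ∑ _T ∈ ((Finset.univ : Finset (Fin N)).powersetCard n).filter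
            (fun T : Finset (Fin N) => ∑ i ∈ T, x i ≤ (1 - lam) * μ),
            (1 - lam) ^ ((1 - lam) * μ) := by
          rw [Finset.sum_const, nsmul_eq_mul]
      _ ≤ ∑ T ∈ ((Finset.univ : Finset (Fin N)).powersetCard n).filter
            (fun T : Finset (Fin N) => ∑ i ∈ T, x i ≤ (1 - lam) * μ),
            ∏ i ∈ T, (1 - lam * x i) := Finset.sum_le_sum hkey
      _ ≤ ∑ T ∈ (Finset.univ : Finset (Fin N)).powersetCard n,
            ∏ i ∈ T, (1 - lam * x i) := by
          refine Finset.sum_le_sum_of_subset_of_nonneg (Finset.filter_subset _ _)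
            fun T _ _ => Finset.prod_nonneg fun i _ => ?_
          rcases hx i with h | h <;> rw [h] <;> nlinarith
      _ ≤ (N.choose n : ℝ) * (1 - lam * ((∑ i, x i) / (N:ℝ))) ^ n := hcount
      _ ≤ (N.choose n : ℝ) * Real.exp (-(lam * μ)) :=
          mul_le_mul_of_nonneg_left hratio hDpos.le
      _ = Real.exp (-(lam * μ)) * (N.choose n : ℝ) := mul_comm _ _
  · -- analytic part
    have h := Real.rpow_le_rpow hbase0 (base_ineq hlam0 hlam1) hμ0
    calc (Real.exp (-lam) / (1 - lam) ^ ((1:ℝ) - lam)) ^ μ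
        ≤ (Real.exp (-(lam ^ 2 / 2))) ^ μ := h
      _ = Real.exp (-(lam ^ 2 * μ / 2)) := by
          rw [← Real.exp_mul]; congr 1; ring
end

section
/- Let m, n, k be positive integers with n ≥ 2, and let ε, δ, β ≥ 0. Let A be a randomized algorithm mapping each histogram h : {1,…,m} → ℕ to a probability distribution over size-k subsets of {1,…,m}, and assume: (i) A is (ε,δ)-differentially private; (ii) for every histogram h, with probability at least 1−β the output of A(h) is (n−2,k)-accurate for h. Let S ⊆ {1,…,m} with k ≤ |S| and k dividing |S|. Let S_L be a uniformly random subset of S of cardinality |S|/k, let S_H = S ∖ S_L, and define the histogram h_{S_H,S_L} by h_{S_H,S_L}[i] = n for i ∈ S_H, h_{S_H,S_L}[i] = n−1 for i ∈ S_L, and h_{S_H,S_L}[i] = 0 for i ∉ S. Then P_{S_L, A}[ A(h_{S_H,S_L}) ∩ S_L ≠ ∅ ] ≥ e^{−ε} · (1 − β − δ − e^{−1}), where the probability is first over the uniform choice of S_L and then over the randomness of A. -/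
/-!
On the histogram `h₀` equal to `n - 1` on `S` and `0` off `S`, an `(n - 2, k)`-accurate output
must lie inside `S`, and a fixed `k`-subset of `S` meets a uniformly random `|S|/k`-subset of `S`
with probability at least `1 - e⁻¹`. So the average over `S_L` of `P[A(h₀) ∩ S_L ≠ ∅]` is
at least `1 - β - e⁻¹`. Every `h_{S_H,S_L}` is a neighbour of `h₀`, and differential privacy
transfers this bound to `A(h_{S_H,S_L})` at the cost of the factor `e^ε` and the additive `δ`.
-/

open scoped ENNReal

/-- The `k`-th largest entry of a histogram `h : Fin m → ℕ` (for `1 ≤ k ≤ m`):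
the largest value `v` such that at least `k` entries of `h` are `≥ v`. -/
noncomputable def kthLargest (m : ℕ) (h : Fin m → ℕ) (k : ℕ) : ℕ :=
  sSup {v : ℕ | k ≤ (Finset.univ.filter fun i => v ≤ h i).card}

open Finset

theorem Nat.sub_sub_mul_le_sub_mul_sub (a k j : ℕ) : (a - k - j) * a ≤ (a - j) * (a - k) := by
  rcases le_or_gt (k + j) a with h | h
  · zify [h, (by omega : k ≤ a), (by omega : j ≤ a), (by omega : j ≤ a - k)]
    nlinarith
  · simp [show a - k - j = 0 by omega]

theorem Nat.descFactorial_sub_mul_pow_le (a k s : ℕ) :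
    (a - k).descFactorial s * a ^ s ≤ a.descFactorial s * (a - k) ^ s := by
  induction s with
  | zero => simp
  | succ s ih =>
    calc (a - k).descFactorial (s + 1) * a ^ (s + 1)
        = ((a - k - s) * a) * ((a - k).descFactorial s * a ^ s) := by
          rw [Nat.descFactorial_succ, pow_succ]; ring
      _ ≤ ((a - s) * (a - k)) * (a.descFactorial s * (a - k) ^ s) :=
          Nat.mul_le_mul (Nat.sub_sub_mul_le_sub_mul_sub a k s) ih
      _ = a.descFactorial (s + 1) * (a - k) ^ (s + 1) := by
          rw [Nat.descFactorial_succ, pow_succ]; ring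

theorem Nat.choose_sub_mul_pow_le (a k s : ℕ) :
    (a - k).choose s * a ^ s ≤ a.choose s * (a - k) ^ s := by
  refine Nat.le_of_mul_le_mul_right ?_ s.factorial_pos
  calc (a - k).choose s * a ^ s * s.factorial = (a - k).descFactorial s * a ^ s := by
        rw [Nat.descFactorial_eq_factorial_mul_choose]; ring
    _ ≤ a.descFactorial s * (a - k) ^ s := Nat.descFactorial_sub_mul_pow_le a k s
    _ = a.choose s * (a - k) ^ s * s.factorial := by
        rw [Nat.descFactorial_eq_factorial_mul_choose]; ring

/-- `C(ks - k, s) / C(ks, s) ≤ ((ks - k) / ks) ^ s = (1 - 1/s) ^ s ≤ e⁻¹`. -/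
theorem Nat.choose_mul_sub_le_exp_neg_one (k s : ℕ) (hs : 0 < s) :
    ((k * s - k).choose s : ℝ) ≤ Real.exp (-1) * (k * s).choose s := by
  rcases Nat.eq_zero_or_pos k with rfl | hk
  · simp [Nat.choose_eq_zero_of_lt hs]
  have hks : (0 : ℝ) < k * s := by positivity
  have hcast : ((k * s - k : ℕ) : ℝ) = k * s * (1 - 1 / s) := by
    rw [Nat.cast_sub (Nat.le_mul_of_pos_right k hs)]; push_cast; field_simp
  have hscaled : ((k * s - k).choose s : ℝ) * (k * s) ^ s ≤
      (k * s).choose s * ((k * s) ^ s * (1 - 1 / s) ^ s) := by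
    have := Nat.cast_le (α := ℝ) |>.mpr (Nat.choose_sub_mul_pow_le (k * s) k s)
    rw [Nat.cast_mul, Nat.cast_mul, Nat.cast_pow, Nat.cast_pow, hcast, mul_pow] at this
    exact_mod_cast this
  calc ((k * s - k).choose s : ℝ) ≤ (k * s).choose s * (1 - 1 / s) ^ s := by
        refine le_of_mul_le_mul_right ?_ (pow_pos hks s)
        linarith
    _ ≤ (k * s).choose s * Real.exp (-1) := by
        gcongr
        exact Real.one_sub_div_pow_le_exp_neg (by exact_mod_cast hs)
    _ = Real.exp (-1) * (k * s).choose s := mul_comm _ _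

theorem Finset.filter_disjoint_powersetCard {ι : Type*} [DecidableEq ι] (o S : Finset ι)
    (s : ℕ) :
    {T ∈ S.powersetCard s | Disjoint o T} = (S \ o).powersetCard s := by
  ext T
  simp only [mem_filter, mem_powersetCard, subset_sdiff]
  tauto

theorem Finset.card_filter_inter_nonempty_powersetCard {ι : Type*} [DecidableEq ι]
    {o S : Finset ι} (hoS : o ⊆ S) (s : ℕ) :
    #{T ∈ S.powersetCard s | (o ∩ T).Nonempty} = (#S).choose s - (#S - #o).choose s := by
  have hsplit := card_filter_add_card_filter_not (s := S.powersetCard s) (fun T => Disjoint o T)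
  simp only [← not_disjoint_iff_nonempty_inter, filter_disjoint_powersetCard,
    card_powersetCard, card_sdiff_of_subset hoS] at hsplit ⊢
  omega

theorem PMF.natCast_mul_toOuterMeasure_le_sum {α β : Type*} (μ : PMF α) (𝒮 : Finset β)
    (p : α → β → Prop) [∀ a b, Decidable (p a b)] (Z : Set α) (c : ℕ)
    (hc : ∀ a ∈ Z, c ≤ #{b ∈ 𝒮 | p a b}) :
    c * μ.toOuterMeasure Z ≤ ∑ b ∈ 𝒮, μ.toOuterMeasure {a | p a b} := by
  simp only [PMF.toOuterMeasure_apply]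
  rw [← ENNReal.tsum_mul_left, ← Summable.tsum_finsetSum (fun _ _ => ENNReal.summable)]
  refine ENNReal.tsum_le_tsum fun a => ?_
  by_cases ha : a ∈ Z
  · simp only [Set.indicator_of_mem ha, Set.indicator_apply, Set.mem_ofPred_eq]
    rw [sum_ite, sum_const_zero, add_zero, sum_const, nsmul_eq_mul]
    gcongr
    exact hc a ha
  · simp [ha]

theorem PMF.toOuterMeasure_apply_le_one {α : Type*} (μ : PMF α) (Z : Set α) :
    μ.toOuterMeasure Z ≤ 1 :=
  (μ.toOuterMeasure.mono (Set.subset_univ Z)).trans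
    ((μ.toOuterMeasure_apply_eq_one_iff _).mpr (Set.subset_univ _)).le

/-- An outcome of size `k` inside `S` misses a uniformly random `s`-subset of `S`, `#S = k * s`,
with probability at most `e⁻¹`; this is the averaged form of that bound. -/
theorem PMF.card_mul_toOuterMeasure_subset_le {ι : Type*} [DecidableEq ι] {k s : ℕ}
    (μ : PMF {o : Finset ι // #o = k}) {S : Finset ι} (hS : #S = k * s) (hs : 0 < s) :
    #(S.powersetCard s) * μ.toOuterMeasure {o | o.val ⊆ S} ≤
      ∑ T ∈ S.powersetCard s, μ.toOuterMeasure {o | (o.val ∩ T).Nonempty} +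
        #(S.powersetCard s) * ENNReal.ofReal (Real.exp (-1)) := by
  set N := #(S.powersetCard s)
  set C := (k * s - k).choose s
  set P := μ.toOuterMeasure {o | o.val ⊆ S}
  have hN : N = (k * s).choose s := by rw [← hS]; exact card_powersetCard s S
  have hCN : C ≤ N := hN ▸ Nat.choose_le_choose s (Nat.sub_le _ _)
  have hhit : ∀ o ∈ {o : {o : Finset ι // #o = k} | o.val ⊆ S},
      N - C ≤ #{T ∈ S.powersetCard s | (o.val ∩ T).Nonempty} := fun o ho => by
    rw [card_filter_inter_nonempty_powersetCard ho, o.2, hS, hN]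
  have hC : (C : ℝ≥0∞) ≤ N * ENNReal.ofReal (Real.exp (-1)) := by
    rw [← ENNReal.ofReal_natCast, ← ENNReal.ofReal_natCast N,
      ← ENNReal.ofReal_mul (Nat.cast_nonneg _), mul_comm, hN]
    exact ENNReal.ofReal_le_ofReal (Nat.choose_mul_sub_le_exp_neg_one k s hs)
  calc (N : ℝ≥0∞) * P = (N - C : ℕ) * P + C * P := by
        rw [← add_mul, ← Nat.cast_add, Nat.sub_add_cancel hCN]
    _ ≤ ∑ T ∈ S.powersetCard s, μ.toOuterMeasure {o | (o.val ∩ T).Nonempty} + C * 1 := by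
        gcongr
        · exact μ.natCast_mul_toOuterMeasure_le_sum _ _ _ _ hhit
        · exact μ.toOuterMeasure_apply_le_one _
    _ ≤ _ := by rw [mul_one]; gcongr

theorem kthLargest_indicator {m k : ℕ} (hk : 0 < k) {S : Finset (Fin m)} (hSk : k ≤ #S)
    (c : ℕ) :
    kthLargest m (fun i => if i ∈ S then c else 0) k = c := by
  suffices {v : ℕ | k ≤ #{i | v ≤ if i ∈ S then c else 0}} = Set.Iic c by
    rw [kthLargest, this, csSup_Iic]
  ext v
  simp only [Set.mem_ofPred_eq, Set.mem_Iic]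
  constructor
  · intro hv
    by_contra! hcv
    have : #{i | v ≤ if i ∈ S then c else 0} = 0 := by
      rw [card_eq_zero, filter_eq_empty_iff]
      intro i _
      split_ifs <;> omega
    omega
  · intro hv
    exact hSk.trans (card_le_card fun i hi => by simp [hi, hv])

theorem subset_of_forall_kthLargest_sub_le {m n k : ℕ} (hn : 1 ≤ n) (hk : 0 < k)
    {S : Finset (Fin m)} (hSk : k ≤ #S) {o : Finset (Fin m)}
    (ho : ∀ i ∈ o, (kthLargest m (fun i => if i ∈ S then n - 1 else 0) k : ℤ) -
      ((n : ℤ) - 2) ≤ ((if i ∈ S then n - 1 else 0 : ℕ) : ℤ)) :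
    o ⊆ S := by
  intro i hi
  by_contra hiS
  have := ho i hi
  rw [kthLargest_indicator hk hSk, if_neg hiS] at this
  push_cast [Nat.cast_sub hn] at this
  omega

theorem abs_indicator_sub_le_one {ι : Type*} [DecidableEq ι] {n : ℕ} {T S : Finset ι}
    (hTS : T ⊆ S) (i : ι) :
    |((if i ∈ S then n - 1 else 0 : ℕ) : ℤ) -
      ((if i ∈ T then n - 1 else if i ∈ S then n else 0 : ℕ) : ℤ)| ≤ 1 := by
  by_cases hT : i ∈ T
  · simp [hT, hTS hT]
  · by_cases hS : i ∈ S <;> simp only [hT, hS, if_true, if_false] <;> rw [abs_le] <;> omega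

namespace ENNReal

open ENNReal (ofReal)

theorem ofReal_exp_neg_mul_le_div {N : ℕ} (hN : N ≠ 0) {x : ℝ≥0∞} {ε a b c : ℝ}
    (hb : 0 ≤ b) (hc : 0 ≤ c)
    (h : N * ofReal a ≤ ofReal (Real.exp ε) * x + N * ofReal b + N * ofReal c) :
    ofReal (Real.exp (-ε) * (a - b - c)) ≤ x / N := by
  rw [ofReal_mul (Real.exp_pos _).le, ofReal_sub _ hc, ofReal_sub _ hb,
    ENNReal.le_div_iff_mul_le (Or.inl (by exact_mod_cast hN)) (Or.inl (natCast_ne_top N))]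
  have hsub : (ofReal a - ofReal b - ofReal c) * N ≤ ofReal (Real.exp ε) * x := by
    rw [ENNReal.sub_mul fun _ _ => natCast_ne_top N, ENNReal.sub_mul fun _ _ => natCast_ne_top N,
      tsub_le_iff_right, tsub_le_iff_right, add_right_comm]
    simpa only [mul_comm _ (N : ℝ≥0∞)] using h
  calc ofReal (Real.exp (-ε)) * (ofReal a - ofReal b - ofReal c) * N
      ≤ ofReal (Real.exp (-ε)) * (ofReal (Real.exp ε) * x) := by
        rw [mul_assoc]; gcongr
    _ = x := by
        rw [← mul_assoc, ← ofReal_mul (Real.exp_pos _).le, ← Real.exp_add, neg_add_cancel,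
          Real.exp_zero, ofReal_one, one_mul]

end ENNReal

theorem stmt_11_general (m n k : ℕ) (hn : 2 ≤ n) (hk : 0 < k)
    (ε δ β : ℝ) (hδ : 0 ≤ δ)
    (A : (Fin m → ℕ) → PMF {s : Finset (Fin m) // s.card = k})
    (hDP : ∀ h h' : Fin m → ℕ, (∀ i, |(h i : ℤ) - (h' i : ℤ)| ≤ 1) →
      ∀ Z : Set {s : Finset (Fin m) // s.card = k},
        (A h).toOuterMeasure Z ≤
          ENNReal.ofReal (Real.exp ε) * (A h').toOuterMeasure Z +
            ENNReal.ofReal δ)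
    (hacc : ∀ h : Fin m → ℕ,
      ENNReal.ofReal (1 - β) ≤
        (A h).toOuterMeasure
          {o | ∀ i ∈ o.val, (kthLargest m h k : ℤ) - ((n : ℤ) - 2) ≤ (h i : ℤ)})
    (S : Finset (Fin m)) (hSk : k ≤ S.card) (hdvd : k ∣ S.card) :
    ENNReal.ofReal (Real.exp (-ε) * (1 - β - δ - Real.exp (-1))) ≤
      (∑ sL ∈ S.powersetCard (S.card / k),
          (A (fun i => if i ∈ sL then n - 1 else if i ∈ S then n else 0)).toOuterMeasure
            {o | (o.val ∩ sL).Nonempty}) /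
        ((S.powersetCard (S.card / k)).card : ℝ≥0∞) := by
  obtain ⟨s, hS⟩ := hdvd
  have hs : 0 < s := Nat.pos_of_ne_zero fun hs => by rw [hs, mul_zero] at hS; omega
  rw [hS, Nat.mul_div_cancel_left s hk]
  set h₀ : Fin m → ℕ := fun i => if i ∈ S then n - 1 else 0
  have hacc₀ : ENNReal.ofReal (1 - β) ≤ (A h₀).toOuterMeasure {o | o.val ⊆ S} :=
    (hacc h₀).trans ((A h₀).toOuterMeasure.mono
      fun o ho => subset_of_forall_kthLargest_sub_le (by omega) hk hSk ho)
  have hpriv : ∑ T ∈ S.powersetCard s, (A h₀).toOuterMeasure {o | (o.val ∩ T).Nonempty} ≤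
      ENNReal.ofReal (Real.exp ε) * ∑ T ∈ S.powersetCard s,
          (A (fun i => if i ∈ T then n - 1 else if i ∈ S then n else 0)).toOuterMeasure
            {o | (o.val ∩ T).Nonempty} +
        #(S.powersetCard s) * ENNReal.ofReal δ := by
    rw [mul_sum, ← nsmul_eq_mul, ← sum_const, ← sum_add_distrib]
    exact sum_le_sum fun T hT => hDP _ _
      (abs_indicator_sub_le_one (mem_powersetCard.mp hT).1) _
  have hN : #(S.powersetCard s) ≠ 0 :=
    (powersetCard_nonempty.mpr (hS ▸ Nat.le_mul_of_pos_left s hk)).card_pos.ne'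
  refine ENNReal.ofReal_exp_neg_mul_le_div hN hδ (Real.exp_pos _).le ?_
  calc (#(S.powersetCard s) : ℝ≥0∞) * ENNReal.ofReal (1 - β)
      ≤ #(S.powersetCard s) * (A h₀).toOuterMeasure {o | o.val ⊆ S} := by gcongr
    _ ≤ _ := (A h₀).card_mul_toOuterMeasure_subset_le hS hs
    _ ≤ _ := by gcongr

/-- Let `A` be a randomized algorithm mapping histograms on
`{1,…,m}` to distributions over size-`k` subsets that is (i) `(ε,δ)`-DP and
(ii) `(n−2,k)`-accurate with probability `≥ 1−β` on every input.  Let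
`S ⊆ {1,…,m}` with `k ≤ |S|` and `k ∣ |S|`, let `S_L` be a uniformly random
subset of `S` of size `|S|/k`, and let `h_{S_H,S_L}` be the histogram taking
value `n` on `S_H = S ∖ S_L`, `n−1` on `S_L`, and `0` off `S`.  Then
`P_{S_L,A}[A(h_{S_H,S_L}) ∩ S_L ≠ ∅] ≥ e^{−ε}(1−β−δ−e^{−1})`, where the outer
probability averages uniformly over the choices of `S_L`. -/
theorem stmt_11 (m n k : ℕ) (hm : 0 < m) (hn : 2 ≤ n) (hk : 0 < k)
    (ε δ β : ℝ) (hε : 0 ≤ ε) (hδ : 0 ≤ δ) (hβ : 0 ≤ β)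
    (A : (Fin m → ℕ) → PMF {s : Finset (Fin m) // s.card = k})
    (hDP : ∀ h h' : Fin m → ℕ, (∀ i, |(h i : ℤ) - (h' i : ℤ)| ≤ 1) →
      ∀ Z : Set {s : Finset (Fin m) // s.card = k},
        (A h).toOuterMeasure Z ≤
          ENNReal.ofReal (Real.exp ε) * (A h').toOuterMeasure Z +
            ENNReal.ofReal δ)
    (hacc : ∀ h : Fin m → ℕ,
      ENNReal.ofReal (1 - β) ≤
        (A h).toOuterMeasure
          {o | ∀ i ∈ o.val, (kthLargest m h k : ℤ) - ((n : ℤ) - 2) ≤ (h i : ℤ)})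
    (S : Finset (Fin m)) (hSk : k ≤ S.card) (hdvd : k ∣ S.card) :
    ENNReal.ofReal (Real.exp (-ε) * (1 - β - δ - Real.exp (-1))) ≤
      (∑ sL ∈ S.powersetCard (S.card / k),
          (A (fun i => if i ∈ sL then n - 1 else if i ∈ S then n else 0)).toOuterMeasure
            {o | (o.val ∩ sL).Nonempty}) /
        ((S.powersetCard (S.card / k)).card : ℝ≥0∞) :=
  stmt_11_general m n k hn hk ε δ β hδ A hDP hacc S hSk hdvd
end

section
/- For all positive integers s, k with k ≤ s and k dividing s, the binomial coefficients satisfy C(s−k, s/k) / C(s, s/k) ≤ e^{−1}. -/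
/-! Removing one element from an `n'`-set, `n' ≤ n`, multiplies the number of its `m`-subsets
by `(n' - m) / n' ≤ (n - m) / n`. Doing this `k` times starting from `n = s = k m` gives
`C(s - k, m) / C(s, m) ≤ (1 - 1/k)^k ≤ e⁻¹`. -/

namespace Nat

lemma sub_mul_le_sub_mul_of_le {a n : ℕ} (m : ℕ) (h : a ≤ n) : (a - m) * n ≤ (n - m) * a := by
  rw [Nat.sub_mul, Nat.sub_mul, Nat.mul_comm a n]
  exact Nat.sub_le_sub_left (Nat.mul_le_mul_left m h) _

lemma choose_mul_le_choose_succ_mul {t n : ℕ} (m : ℕ) (h : t + 1 ≤ n) :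
    t.choose m * n ≤ (t + 1).choose m * (n - m) := by
  refine Nat.le_of_mul_le_mul_left ?_ t.succ_pos
  calc (t + 1) * (t.choose m * n) = (t + 1).choose m * ((t + 1 - m) * n) := by
        rw [← Nat.mul_assoc, Nat.mul_comm (t + 1), choose_mul_succ_eq, Nat.mul_assoc]
    _ ≤ (t + 1).choose m * ((n - m) * (t + 1)) :=
        Nat.mul_le_mul_left _ (sub_mul_le_sub_mul_of_le m h)
    _ = (t + 1) * ((t + 1).choose m * (n - m)) := by ring

lemma choose_sub_mul_pow_le_s12 {n j : ℕ} (m : ℕ) (hj : j ≤ n) :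
    (n - j).choose m * n ^ j ≤ n.choose m * (n - m) ^ j := by
  induction j with
  | zero => simp
  | succ j ih =>
    have hstep := choose_mul_le_choose_succ_mul (t := n - (j + 1)) (n := n) m (by omega)
    rw [show n - (j + 1) + 1 = n - j by omega] at hstep
    calc (n - (j + 1)).choose m * n ^ (j + 1) = (n - (j + 1)).choose m * n * n ^ j := by ring
      _ ≤ (n - j).choose m * (n - m) * n ^ j := Nat.mul_le_mul_right _ hstep
      _ = (n - m) * ((n - j).choose m * n ^ j) := by ring
      _ ≤ (n - m) * (n.choose m * (n - m) ^ j) := Nat.mul_le_mul_left _ (ih (by omega))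
      _ = n.choose m * (n - m) ^ (j + 1) := by ring

lemma choose_sub_div_choose_le_one_sub_div_pow {n m j : ℕ} (hn : 0 < n) (hm : m ≤ n)
    (hj : j ≤ n) : ((n - j).choose m : ℝ) / n.choose m ≤ (1 - m / n) ^ j := by
  have hle : ((n - j).choose m : ℝ) * n ^ j ≤ n.choose m * (n - m : ℝ) ^ j := by
    rw [← Nat.cast_sub hm]
    exact_mod_cast choose_sub_mul_pow_le_s12 m hj
  have hchoose : (0 : ℝ) < n.choose m := by exact_mod_cast choose_pos hm
  rw [one_sub_div (by positivity), div_pow, div_le_div_iff₀ hchoose (by positivity)]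
  linarith

end Nat

/-- For all positive integers `s`, `k` with `k ≤ s` and `k ∣ s`,
`C(s−k, s/k) / C(s, s/k) ≤ e⁻¹`. -/
theorem stmt_12 (s k : ℕ) (hk : 0 < k) (hks : k ≤ s) (hdvd : k ∣ s) :
    ((Nat.choose (s - k) (s / k) : ℝ)) / (Nat.choose s (s / k) : ℝ) ≤ Real.exp (-1) := by
  obtain ⟨m, rfl⟩ := hdvd
  have hm : 0 < m := Nat.pos_of_mul_pos_left (hk.trans_le hks)
  rw [Nat.mul_div_cancel_left m hk]
  calc ((k * m - k).choose m : ℝ) / (k * m).choose m ≤ (1 - m / (k * m : ℕ)) ^ k :=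
        Nat.choose_sub_div_choose_le_one_sub_div_pow (by positivity)
          (Nat.le_mul_of_pos_left m hk) hks
    _ = (1 - 1 / k) ^ k := by
        push_cast
        rw [div_mul_cancel_right₀ (by positivity), one_div]
    _ ≤ Real.exp (-1) := Real.one_sub_div_pow_le_exp_neg (by exact_mod_cast hk)
end

section
/- Let m, k be positive integers with 2k ≤ m and 50 dividing m, and let X_1, …, X_{m/50} be i.i.d. Bernoulli random variables each equal to 1 with probability 2k/m and 0 otherwise. Then P[ ∑_{i=1}^{m/50} X_i ≥ k ] ≤ ( e^{24} / 25^{25} )^{k/25} ≤ 0.11. -/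
open MeasureTheory ProbabilityTheory Real
open scoped ENNReal

/-!
Chernoff bound with `t = log 25`. The sum of the `m / 50` Bernoulli(`p = 2k/m`) variables has
mean `k / 25`, so
`P[∑ X_i ≥ k] ≤ e^{-tk} (1 + p (e^t - 1))^{m/50} ≤ e^{-tk + (k/25)(e^t - 1)} = (e^{24} / 25^{25})^{k/25}`.
Since `e^{24} ≤ 2.75^{25} = 0.11^{25} · 25^{25}`, this is at most `0.11` once `k ≥ 1`.
-/

section Bernoulli

variable {Ω : Type*} [MeasurableSpace Ω] {μ : Measure Ω} [IsProbabilityMeasure μ]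
  {X : Ω → ℝ} {p : ℝ}

lemma ae_eq_one_or_eq_zero_of_bernoulli (hX : Measurable X)
    (hone : μ {ω | X ω = 1} = ENNReal.ofReal p)
    (hzero : μ {ω | X ω = 0} = 1 - ENNReal.ofReal p) :
    ∀ᵐ ω ∂μ, X ω = 1 ∨ X ω = 0 := by
  have hdisj : Disjoint {ω | X ω = 1} {ω | X ω = 0} :=
    Set.disjoint_left.2 fun ω h1 h0 => one_ne_zero (h1.symm.trans h0)
  have hunion : μ ({ω | X ω = 1} ∪ {ω | X ω = 0}) = 1 := by
    rw [measure_union hdisj (hX (measurableSet_singleton 0)), hone, hzero,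
      add_tsub_cancel_of_le (hone ▸ prob_le_one)]
  exact mem_ae_iff.2 ((prob_compl_eq_zero_iff
    ((hX (measurableSet_singleton 1)).union (hX (measurableSet_singleton 0)))).2 hunion)

lemma exp_mul_ae_eq_indicator (hX : Measurable X)
    (hone : μ {ω | X ω = 1} = ENNReal.ofReal p)
    (hzero : μ {ω | X ω = 0} = 1 - ENNReal.ofReal p) (t : ℝ) :
    (fun ω => exp (t * X ω)) =ᵐ[μ]
      {ω | X ω = 1}.indicator (fun _ => exp t) + {ω | X ω = 0}.indicator 1 := by
  filter_upwards [ae_eq_one_or_eq_zero_of_bernoulli hX hone hzero] with ω hω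
  rcases hω with h | h <;> simp [h]

lemma integrable_exp_mul_of_bernoulli (hX : Measurable X)
    (hone : μ {ω | X ω = 1} = ENNReal.ofReal p)
    (hzero : μ {ω | X ω = 0} = 1 - ENNReal.ofReal p) (t : ℝ) :
    Integrable (fun ω => exp (t * X ω)) μ :=
  (((integrable_const _).indicator (hX (measurableSet_singleton 1))).add
    ((integrable_const _).indicator (hX (measurableSet_singleton 0)))).congr
    (exp_mul_ae_eq_indicator hX hone hzero t).symm

lemma mgf_of_bernoulli (hX : Measurable X) (hp : 0 ≤ p)
    (hone : μ {ω | X ω = 1} = ENNReal.ofReal p)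
    (hzero : μ {ω | X ω = 0} = 1 - ENNReal.ofReal p) (t : ℝ) :
    mgf X μ t = p * exp t + (1 - p) := by
  have hA : MeasurableSet {ω | X ω = 1} := hX (measurableSet_singleton 1)
  have hB : MeasurableSet {ω | X ω = 0} := hX (measurableSet_singleton 0)
  have hone_real : μ.real {ω | X ω = 1} = p := by
    rw [measureReal_def, hone, ENNReal.toReal_ofReal hp]
  have hzero_real : μ.real {ω | X ω = 0} = 1 - p := by
    rw [measureReal_def, hzero, ENNReal.toReal_sub_of_le (hone ▸ prob_le_one)
      ENNReal.one_ne_top, ENNReal.toReal_one, ENNReal.toReal_ofReal hp]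
  rw [mgf, integral_congr_ae (exp_mul_ae_eq_indicator hX hone hzero t),
    integral_add' ((integrable_const _).indicator hA) ((integrable_const _).indicator hB),
    Pi.one_def, integral_indicator_const _ hA, integral_indicator_const _ hB, hone_real,
    hzero_real, smul_eq_mul, smul_eq_mul, mul_comm, mul_one]

lemma measureReal_sum_ge_le_of_bernoulli {ι : Type*} [Fintype ι] {X : ι → Ω → ℝ}
    (hX : ∀ i, Measurable (X i)) (hindep : iIndepFun X μ) (hp : 0 ≤ p)
    (hone : ∀ i, μ {ω | X i ω = 1} = ENNReal.ofReal p)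
    (hzero : ∀ i, μ {ω | X i ω = 0} = 1 - ENNReal.ofReal p) (a : ℝ) {t : ℝ} (ht : 0 ≤ t) :
    μ.real {ω | a ≤ ∑ i, X i ω} ≤ exp (-t * a + Fintype.card ι * p * (exp t - 1)) := by
  have hchernoff := measure_ge_le_exp_mul_mgf (X := ∑ i, X i) a ht
    (hindep.integrable_exp_mul_sum (s := Finset.univ) hX fun i _ =>
      integrable_exp_mul_of_bernoulli (hX i) (hone i) (hzero i) t)
  simp only [Finset.sum_apply, hindep.mgf_sum hX, mgf_of_bernoulli (hX _) hp (hone _) (hzero _),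
    Finset.prod_const, Finset.card_univ] at hchernoff
  have hmgf_le : p * exp t + (1 - p) ≤ exp (p * (exp t - 1)) := by
    linarith [add_one_le_exp (p * (exp t - 1))]
  calc _ ≤ exp (-t * a) * (p * exp t + (1 - p)) ^ Fintype.card ι := hchernoff
    _ ≤ exp (-t * a) * exp (p * (exp t - 1)) ^ Fintype.card ι := by
        gcongr
        linarith [mul_nonneg hp (sub_nonneg.2 (one_le_exp ht))]
    _ = exp (-t * a + Fintype.card ι * p * (exp t - 1)) := by
        rw [← exp_nat_mul, ← exp_add, mul_assoc]

end Bernoulli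

lemma exp_neg_log_mul_add_eq_rpow {c : ℕ} (hc : 0 < c) (k : ℝ) :
    exp (-log c * k + k / c * (c - 1)) = (exp (c - 1) / c ^ c) ^ (k / c) := by
  rw [rpow_def_of_pos (by positivity), log_div (exp_ne_zero _) (by positivity), log_exp,
    log_pow]
  congr 1
  field_simp
  ring

lemma exp_24_div_25_pow_le : exp 24 / 25 ^ 25 ≤ (0.11 : ℝ) ^ 25 := by
  rw [div_le_iff₀ (by positivity)]
  calc exp 24 = exp 1 ^ 24 := by rw [← exp_nat_mul]; norm_num
    _ ≤ 2.7182818286 ^ 24 := by gcongr; exact exp_one_lt_d9.le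
    _ ≤ 0.11 ^ 25 * 25 ^ 25 := by norm_num

lemma rpow_le_of_le_pow {b q x : ℝ} {n : ℕ} (hn : n ≠ 0) (hb : 0 < b) (hb1 : b ≤ 1)
    (hq : 0 ≤ q) (hbq : b ≤ q ^ n) (hx : (n : ℝ)⁻¹ ≤ x) : b ^ x ≤ q :=
  calc b ^ x ≤ b ^ (n : ℝ)⁻¹ := rpow_le_rpow_of_exponent_ge hb hb1 hx
    _ ≤ (q ^ n) ^ (n : ℝ)⁻¹ := by gcongr
    _ = q := pow_rpow_inv_natCast hq hn

theorem stmt_16_general {Ω : Type*} [MeasureSpace Ω] [IsProbabilityMeasure (ℙ : Measure Ω)]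
    (m k : ℕ) (hk : 0 < k) (hkm : 2 * k ≤ m) (h50 : 50 ∣ m)
    (X : Fin (m / 50) → Ω → ℝ) (hXmeas : ∀ i, Measurable (X i))
    (hindep : iIndepFun X ℙ)
    (hone : ∀ i, ℙ {ω | X i ω = 1} = ENNReal.ofReal (2 * k / m))
    (hzero : ∀ i, ℙ {ω | X i ω = 0} = 1 - ENNReal.ofReal (2 * k / m)) :
    ℙ {ω | (k : ℝ) ≤ ∑ i, X i ω} ≤
        ENNReal.ofReal ((Real.exp 24 / 25 ^ 25) ^ ((k : ℝ) / 25)) ∧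
      (Real.exp 24 / 25 ^ 25 : ℝ) ^ ((k : ℝ) / 25) ≤ 0.11 := by
  have hm : (0 : ℝ) < m := by exact_mod_cast (by omega : 0 < m)
  have hmean : ((m / 50 : ℕ) : ℝ) * (2 * k / m) = k / 25 := by
    rw [Nat.cast_div h50 (by norm_num)]
    field_simp
    norm_num
  have hchernoff := measureReal_sum_ge_le_of_bernoulli hXmeas hindep (by positivity) hone hzero
    k (log_nonneg (by norm_num : (1 : ℝ) ≤ 25))
  rw [Fintype.card_fin, hmean, exp_log (by norm_num)] at hchernoff
  have hbound := exp_neg_log_mul_add_eq_rpow (c := 25) (by norm_num) k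
  rw [Nat.cast_ofNat] at hbound
  rw [hbound, show (25 : ℝ) - 1 = 24 by norm_num] at hchernoff
  refine ⟨(ENNReal.le_ofReal_iff_toReal_le (measure_ne_top _ _) (by positivity)).2 hchernoff, ?_⟩
  refine rpow_le_of_le_pow (n := 25) (by norm_num) (by positivity)
    (exp_24_div_25_pow_le.trans (by norm_num)) (by norm_num) exp_24_div_25_pow_le ?_
  rw [Nat.cast_ofNat, inv_eq_one_div]
  gcongr
  exact_mod_cast hk

/-- If `2k ≤ m`, `50 ∣ m`, and `X_1, …, X_{m/50}` are i.i.d.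
Bernoulli random variables with success probability `2k/m`, then
`P[∑ X_i ≥ k] ≤ (e^{24}/25^{25})^{k/25} ≤ 0.11`. -/
theorem stmt_16 {Ω : Type*} [MeasureSpace Ω] [IsProbabilityMeasure (ℙ : Measure Ω)]
    (m k : ℕ) (hm : 0 < m) (hk : 0 < k) (hkm : 2 * k ≤ m) (h50 : 50 ∣ m)
    (X : Fin (m / 50) → Ω → ℝ) (hXmeas : ∀ i, Measurable (X i))
    (hindep : iIndepFun X ℙ)
    (hone : ∀ i, ℙ {ω | X i ω = 1} = ENNReal.ofReal (2 * k / m))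
    (hzero : ∀ i, ℙ {ω | X i ω = 0} = 1 - ENNReal.ofReal (2 * k / m)) :
    ℙ {ω | (k : ℝ) ≤ ∑ i, X i ω} ≤
        ENNReal.ofReal ((Real.exp 24 / 25 ^ 25) ^ ((k : ℝ) / 25)) ∧
      (Real.exp 24 / 25 ^ 25 : ℝ) ^ ((k : ℝ) / 25) ≤ 0.11 :=
  stmt_16_general m k hk hkm h50 X hXmeas hindep hone hzero
end

section
/- For all positive integers m and k, ∫_{√(m·k)}^{∞} (e^k / k^k) · (r²/m)^k · e^{−r²/m} dr ≤ √(π·m/2). -/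
open MeasureTheory

lemma aux_log_ineq (a b : ℝ) (ha : 0 < a) (hab : a ≤ b) :
    a ^ 2 + a ^ 2 * Real.log (b ^ 2) - a ^ 2 * Real.log (a ^ 2) - b ^ 2 ≤ -(b - a) ^ 2 := by
  have hb : 0 < b := lt_of_lt_of_le ha hab
  have h1 : Real.log (b / a) ≤ b / a - 1 := Real.log_le_sub_one_of_pos (by positivity)
  rw [Real.log_div hb.ne' ha.ne'] at h1
  have h2 : a * (Real.log b - Real.log a) ≤ b - a := by
    have := mul_le_mul_of_nonneg_left h1 ha.le
    calc a * (Real.log b - Real.log a) ≤ a * (b / a - 1) := this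
      _ = b - a := by field_simp
  rw [Real.log_pow, Real.log_pow]
  push_cast
  nlinarith [mul_le_mul_of_nonneg_left h2 (by positivity : (0:ℝ) ≤ 2 * a)]

lemma aux_pointwise (k : ℕ) (hk : 0 < k) (t : ℝ) (ht : (k : ℝ) ≤ t) :
    Real.exp 1 ^ k / (k : ℝ) ^ k * t ^ k * Real.exp (-t) ≤
      Real.exp (-(Real.sqrt t - Real.sqrt k) ^ 2) := by
  have hk0 : (0 : ℝ) < k := by exact_mod_cast hk
  have ht0 : (0 : ℝ) < t := lt_of_lt_of_le hk0 ht
  have e1 : Real.exp 1 ^ k = Real.exp k := by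
    rw [← Real.exp_nat_mul, mul_one]
  have e2 : t ^ k = Real.exp (k * Real.log t) := by
    rw [Real.exp_nat_mul, Real.exp_log ht0]
  have e3 : (k : ℝ) ^ k = Real.exp (k * Real.log k) := by
    rw [Real.exp_nat_mul, Real.exp_log hk0]
  rw [e1, e2, e3, ← Real.exp_sub, ← Real.exp_add, ← Real.exp_add]
  apply Real.exp_le_exp.mpr
  have key := aux_log_ineq (Real.sqrt k) (Real.sqrt t) (Real.sqrt_pos.mpr hk0)
    (Real.sqrt_le_sqrt ht)
  rw [Real.sq_sqrt hk0.le, Real.sq_sqrt ht0.le] at key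
  nlinarith [key]

/-- For all positive integers `m`, `k`,
`∫_{√(mk)}^∞ (e^k/k^k)·(r²/m)^k·e^{−r²/m} dr ≤ √(πm/2)`
(the Lebesgue integral of the nonnegative integrand over `[√(mk), ∞)`). -/
theorem stmt_18 (m k : ℕ) (hm : 0 < m) (hk : 0 < k) :
    ∫⁻ r in Set.Ici (Real.sqrt (m * k)),
        ENNReal.ofReal
          (Real.exp 1 ^ k / (k : ℝ) ^ k * (r ^ 2 / (m : ℝ)) ^ k *
            Real.exp (-(r ^ 2 / (m : ℝ)))) ≤
      ENNReal.ofReal (Real.sqrt (Real.pi * m / 2)) := by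
  have hm0 : (0 : ℝ) < m := by exact_mod_cast hm
  have hk0 : (0 : ℝ) < k := by exact_mod_cast hk
  set c : ℝ := Real.sqrt (m * k) with hc
  have hc0 : 0 < c := Real.sqrt_pos.mpr (by positivity)
  have hcsq : c ^ 2 = m * k := Real.sq_sqrt (by positivity)
  set G : ℝ → ENNReal := fun x => ENNReal.ofReal (Real.exp (-(1 / (m : ℝ)) * x ^ 2)) with hG
  -- Step 1: pointwise bound
  have step1 : ∫⁻ r in Set.Ici c,
      ENNReal.ofReal
        (Real.exp 1 ^ k / (k : ℝ) ^ k * (r ^ 2 / (m : ℝ)) ^ k *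
          Real.exp (-(r ^ 2 / (m : ℝ)))) ≤ ∫⁻ r in Set.Ici c, G (r - c) := by
    apply setLIntegral_mono
    · exact (ENNReal.measurable_ofReal.comp
        ((Real.measurable_exp.comp ((measurable_const.mul
          (((measurable_id.sub measurable_const)).pow_const 2)))))).comp measurable_id
    · intro r hr
      have hrc : c ≤ r := hr
      have hr0 : 0 < r := lt_of_lt_of_le hc0 hrc
      set t : ℝ := r ^ 2 / m with htdef
      have htk : (k : ℝ) ≤ t := by
        rw [htdef]
        rw [le_div_iff₀ hm0]
        nlinarith [hcsq, mul_le_mul_of_nonneg_left hrc hc0.le, sq_nonneg (r - c)]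
      have hbound := aux_pointwise k hk t htk
      apply ENNReal.ofReal_le_ofReal
      refine hbound.trans (le_of_eq ?_)
      congr 1
      have hsqt : Real.sqrt t = r / Real.sqrt m := by
        rw [htdef, Real.sqrt_div (by positivity) (m : ℝ), Real.sqrt_sq hr0.le]
      have hcm : c = Real.sqrt m * Real.sqrt k := by
        rw [hc, Real.sqrt_mul (by positivity)]
      have hsm : (0:ℝ) < Real.sqrt m := Real.sqrt_pos.mpr hm0
      have : Real.sqrt t - Real.sqrt k = (r - c) / Real.sqrt m := by
        rw [hsqt, hcm]
        field_simp
      rw [this]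
      rw [div_pow, Real.sq_sqrt hm0.le]
      ring
  -- Step 2: translate
  have step2 : ∫⁻ r in Set.Ici c, G (r - c) = ∫⁻ x in Set.Ici (0 : ℝ), G x := by
    have hGmeas : Measurable G :=
      ENNReal.measurable_ofReal.comp
        (Real.measurable_exp.comp (measurable_const.mul (measurable_id.pow_const 2)))
    rw [← lintegral_indicator measurableSet_Ici _, ← lintegral_indicator measurableSet_Ici _]
    have hfun : ∀ r : ℝ, (Set.Ici c).indicator (fun r => G (r - c)) r =
        (Set.Ici (0:ℝ)).indicator G (r - c) := by
      intro r
      by_cases h : c ≤ r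
      · rw [Set.indicator_of_mem (by simpa using h), Set.indicator_of_mem (by simpa [sub_nonneg] using h)]
      · rw [Set.indicator_of_notMem (by simpa using h), Set.indicator_of_notMem
          (by simpa [sub_nonneg] using h)]
    simp_rw [hfun]
    exact lintegral_sub_right_eq_self ((Set.Ici (0:ℝ)).indicator G) c
  -- Step 3: evaluate the Gaussian integral
  have hb : (0 : ℝ) < 1 / m := by positivity
  have hint : IntegrableOn (fun x : ℝ => Real.exp (-(1 / (m : ℝ)) * x ^ 2)) (Set.Ici 0) :=
    (integrable_exp_neg_mul_sq hb).integrableOn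
  have step3 : ∫⁻ x in Set.Ici (0 : ℝ), G x =
      ENNReal.ofReal (∫ x in Set.Ici (0:ℝ), Real.exp (-(1 / (m : ℝ)) * x ^ 2)) := by
    rw [ofReal_integral_eq_lintegral_ofReal hint
      (ae_of_all _ fun x => (Real.exp_pos _).le)]
  have step4 : (∫ x in Set.Ici (0:ℝ), Real.exp (-(1 / (m : ℝ)) * x ^ 2)) =
      Real.sqrt (Real.pi / (1 / m)) / 2 := by
    rw [MeasureTheory.integral_Ici_eq_integral_Ioi, integral_gaussian_Ioi]
  -- Step 5: final comparison
  have step5 : Real.sqrt (Real.pi / (1 / (m:ℝ))) / 2 ≤ Real.sqrt (Real.pi * m / 2) := by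
    have h1 : Real.pi / (1 / (m:ℝ)) = Real.pi * m := by field_simp
    rw [h1]
    have h2 : Real.sqrt 2 ≤ 2 := by
      nlinarith [Real.sq_sqrt (show (0:ℝ) ≤ 2 by norm_num), Real.sqrt_nonneg 2]
    calc Real.sqrt (Real.pi * m) / 2 ≤ Real.sqrt (Real.pi * m) / Real.sqrt 2 := by
          gcongr
      _ = Real.sqrt (Real.pi * m / 2) := (Real.sqrt_div (by positivity) 2).symm
  calc ∫⁻ r in Set.Ici c,
      ENNReal.ofReal
        (Real.exp 1 ^ k / (k : ℝ) ^ k * (r ^ 2 / (m : ℝ)) ^ k *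
          Real.exp (-(r ^ 2 / (m : ℝ)))) ≤ ∫⁻ r in Set.Ici c, G (r - c) := step1
    _ = ∫⁻ x in Set.Ici (0 : ℝ), G x := step2
    _ = ENNReal.ofReal (∫ x in Set.Ici (0:ℝ), Real.exp (-(1 / (m : ℝ)) * x ^ 2)) := step3
    _ = ENNReal.ofReal (Real.sqrt (Real.pi / (1 / m)) / 2) := by rw [step4]
    _ ≤ ENNReal.ofReal (Real.sqrt (Real.pi * m / 2)) := ENNReal.ofReal_le_ofReal step5
end
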